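/- Let (M, φ, ξ, η, g) be an almost contact metric manifold satisfying condition C₁': (∇_X φ)Y + (∇_{φX} φ)(φY) = 2g(X,Y)ξ - 2η(Y)X + η(Y)∇_{φX}ξ for all X, Y. Then ∇_ξ φ = 0, ∇_ξ ξ = 0, and (∇_X η)(Y) + (∇_{φX} η)(φY) + 2g(φX,Y) = 0 for all X, Y. -/
import Mathlib


/-- Abstract model of an almost contact manifold: `C` is the ring of smooth
functions, `V` the `C`-module of vector fields, with Lie bracket `bracket`,
the derivation action `act X f = X f`, and the almost contact structure
`(phi, xi, eta)`. -/
structure AlmostContactStr (C V : Type*) [CommRing C] [Algebra ℝ C]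
    [AddCommGroup V] [Module C V] where
  bracket : V → V → V
  act : V → C → C
  phi : V →ₗ[C] V
  xi : V
  eta : V →ₗ[C] C
  bracket_antisymm : ∀ X Y, bracket X Y = - bracket Y X
  bracket_add_left : ∀ X Y Z, bracket (X + Y) Z = bracket X Z + bracket Y Z
  bracket_smul_right : ∀ (c : C) (X Y : V),
    bracket X (c • Y) = c • bracket X Y + act X c • Y
  act_add_left : ∀ X Y c, act (X + Y) c = act X c + act Y c
  act_smul_left : ∀ (a : C) (X : V) (c : C), act (a • X) c = a * act X c
  act_add : ∀ X a b, act X (a + b) = act X a + act X b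
  act_mul : ∀ X a b, act X (a * b) = act X a * b + a * act X b
  phi_phi : ∀ X, phi (phi X) = - X + eta X • xi
  phi_xi : phi xi = 0
  eta_phi : ∀ X, eta (phi X) = 0
  eta_xi : eta xi = 1

/-- An almost contact metric structure together with its Levi-Civita
connection `nabla` (torsion-free and metric). -/
structure ACMetricStr (C V : Type*) [CommRing C] [Algebra ℝ C]
    [AddCommGroup V] [Module C V] extends AlmostContactStr C V where
  g : V →ₗ[C] V →ₗ[C] C
  g_symm : ∀ X Y, g X Y = g Y X
  g_phi : ∀ X Y, g (phi X) (phi Y) = g X Y - eta X * eta Y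
  eta_eq : ∀ X, eta X = g xi X
  nabla : V → V → V
  nabla_add_left : ∀ X Y Z, nabla (X + Y) Z = nabla X Z + nabla Y Z
  nabla_smul_left : ∀ (c : C) (X Y : V), nabla (c • X) Y = c • nabla X Y
  nabla_add_right : ∀ X Y Z, nabla X (Y + Z) = nabla X Y + nabla X Z
  nabla_leibniz : ∀ (c : C) (X Y : V),
    nabla X (c • Y) = c • nabla X Y + act X c • Y
  torsion_free : ∀ X Y, nabla X Y - nabla Y X = bracket X Y
  metric_compat : ∀ X Y Z, act X (g Y Z) = g (nabla X Y) Z + g Y (nabla X Z)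

variable {C V : Type*} [CommRing C] [Algebra ℝ C]
  [AddCommGroup V] [Module C V] [Module ℝ V] [IsScalarTower ℝ C V]

namespace ACMetricStr

variable (A : ACMetricStr C V)

/-- `h = (1/2) L_ξ φ`, i.e. `hX = (1/2)([ξ, φX] - φ[ξ, X])`. -/
noncomputable def hT (X : V) : V :=
  (1/2 : ℝ) • (A.bracket A.xi (A.phi X) - A.phi (A.bracket A.xi X))

/-- `(∇_X φ)Y`. -/
noncomputable def covPhi (X Y : V) : V := A.nabla X (A.phi Y) - A.phi (A.nabla X Y)

/-- `(∇_X η)(Y)`. -/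
noncomputable def covEta (X Y : V) : C := A.act X (A.eta Y) - A.eta (A.nabla X Y)

/-- `dη(X,Y) = (1/2)(X(η Y) - Y(η X) - η [X,Y])`. -/
noncomputable def dEta (X Y : V) : C :=
  (1/2 : ℝ) • (A.act X (A.eta Y) - A.act Y (A.eta X) - A.eta (A.bracket X Y))

/-- `N⁽²⁾(X,Y) = (L_{φX} η)(Y) - (L_{φY} η)(X)`. -/
noncomputable def N2 (X Y : V) : C :=
  (A.act (A.phi X) (A.eta Y) - A.eta (A.bracket (A.phi X) Y))
    - (A.act (A.phi Y) (A.eta X) - A.eta (A.bracket (A.phi Y) X))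

/-- Condition `C₁`:
`(∇_X φ)Y + (∇_{φX} φ)(φY) = 2g(X,Y)ξ - η(Y)X - η(X)η(Y)ξ - η(Y)hX`. -/
noncomputable def C1 : Prop := ∀ X Y : V,
  A.covPhi X Y + A.covPhi (A.phi X) (A.phi Y)
    = ((2 : C) * A.g X Y) • A.xi - A.eta Y • X - (A.eta X * A.eta Y) • A.xi
      - A.eta Y • A.hT X

/-- Condition `C₁'`:
`(∇_X φ)Y + (∇_{φX} φ)(φY) = 2g(X,Y)ξ - 2η(Y)X + η(Y)∇_{φX}ξ`. -/
noncomputable def C1' : Prop := ∀ X Y : V,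
  A.covPhi X Y + A.covPhi (A.phi X) (A.phi Y)
    = ((2 : C) * A.g X Y) • A.xi - ((2 : C) * A.eta Y) • X
      + A.eta Y • A.nabla (A.phi X) A.xi

lemma act_one' (X : V) : A.act X 1 = 0 := by
  have h := A.act_mul X 1 1
  simp only [one_mul, mul_one] at h
  linear_combination -h

lemma act_zero' (X : V) : A.act X 0 = 0 := by
  have h := A.act_add X 0 0
  simp only [add_zero] at h
  linear_combination -h

lemma nabla_zero_right' (X : V) : A.nabla X 0 = 0 := by
  have h := A.nabla_add_right X 0 0
  simp only [add_zero] at h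
  exact (left_eq_add.mp h)

lemma nabla_zero_left' (Y : V) : A.nabla 0 Y = 0 := by
  have h := A.nabla_add_left 0 0 Y
  simp only [add_zero] at h
  exact (left_eq_add.mp h)

lemma g_xi_xi' : A.g A.xi A.xi = 1 := by
  have := A.eta_eq A.xi
  rw [A.eta_xi] at this
  exact this.symm

lemma g_nabla_xi_xi' (X : V) : A.g (A.nabla X A.xi) A.xi = 0 := by
  have h := A.metric_compat X A.xi A.xi
  rw [A.g_xi_xi', A.act_one', A.g_symm A.xi (A.nabla X A.xi)] at h
  have h2 : (2 : C) * A.g (A.nabla X A.xi) A.xi = 0 := by linear_combination -h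
  have e : (algebraMap ℝ C (1/2)) * (2 : C) = 1 := by
    rw [show ((2:C)) = algebraMap ℝ C 2 from (map_ofNat _ 2).symm, ← map_mul]
    norm_num
  calc A.g (A.nabla X A.xi) A.xi
      = (algebraMap ℝ C (1/2)) * ((2 : C) * A.g (A.nabla X A.xi) A.xi) := by
        rw [← mul_assoc, e, one_mul]
    _ = 0 := by rw [h2, mul_zero]

lemma eta_nabla_xi' (X : V) : A.eta (A.nabla X A.xi) = 0 := by
  rw [A.eta_eq, A.g_symm]
  exact A.g_nabla_xi_xi' X

lemma covEta_eq' (X Y : V) : A.covEta X Y = A.g (A.nabla X A.xi) Y := by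
  unfold covEta
  rw [A.eta_eq Y, A.eta_eq (A.nabla X Y)]
  have h := A.metric_compat X A.xi Y
  linear_combination h

lemma eta_covPhi' (X Y : V) : A.eta (A.covPhi X Y) = - A.covEta X (A.phi Y) := by
  unfold covPhi covEta
  rw [map_sub, A.eta_phi, A.eta_phi, A.act_zero']
  ring

lemma g_phi_xi' (X : V) : A.g (A.phi X) A.xi = 0 := by
  rw [A.g_symm, ← A.eta_eq, A.eta_phi]

lemma g_phi_skew' (X Y : V) : A.g X (A.phi Y) = - A.g (A.phi X) Y := by
  have h1 := A.g_phi X (A.phi Y)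
  rw [A.phi_phi, A.eta_phi] at h1
  simp only [map_add, map_neg, map_smul, A.g_phi_xi', smul_eq_mul, mul_zero] at h1
  linear_combination -h1

lemma covEta_phiphi' (X Y : V) :
    A.covEta X (A.phi (A.phi Y)) = - A.covEta X Y := by
  rw [A.covEta_eq', A.covEta_eq', A.phi_phi]
  have hz : A.g (A.nabla X A.xi) A.xi = 0 := A.g_nabla_xi_xi' X
  simp only [map_add, map_neg, map_smul, hz, smul_eq_mul, mul_zero, add_zero]

end ACMetricStr

/-- Condition `C₁'` implies `∇_ξ φ = 0`, `∇_ξ ξ = 0`, and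
`(∇_X η)(Y) + (∇_{φX} η)(φY) + 2g(φX,Y) = 0`. -/
theorem conditions_of_C1' (A : ACMetricStr C V) (hC1' : A.C1') :
    (∀ Y : V, A.covPhi A.xi Y = 0) ∧ A.nabla A.xi A.xi = 0 ∧
      (∀ X Y : V,
        A.covEta X Y + A.covEta (A.phi X) (A.phi Y)
          + (2 : C) * A.g (A.phi X) Y = 0) := by
  have part1 : ∀ Y : V, A.covPhi A.xi Y = 0 := by
    intro Y
    have h := hC1' A.xi Y
    have hz : A.covPhi (A.phi A.xi) (A.phi Y) = 0 := by
      rw [A.phi_xi]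
      unfold ACMetricStr.covPhi
      rw [A.nabla_zero_left', A.nabla_zero_left', map_zero, sub_zero]
    rw [hz, A.phi_xi, A.nabla_zero_left', smul_zero, add_zero, add_zero,
      ← A.eta_eq, sub_self] at h
    exact h
  have part2 : A.nabla A.xi A.xi = 0 := by
    have h0 := part1 A.xi
    unfold ACMetricStr.covPhi at h0
    rw [A.phi_xi, A.nabla_zero_right', zero_sub, neg_eq_zero] at h0
    have h2 := congrArg A.phi h0
    rw [A.phi_phi, A.eta_nabla_xi', map_zero, zero_smul, add_zero,
      neg_eq_zero] at h2
    exact h2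
  refine ⟨part1, part2, ?_⟩
  intro X Y
  have h := congrArg A.eta (hC1' X (A.phi Y))
  rw [map_add, A.eta_covPhi', A.eta_covPhi', A.covEta_phiphi',
    A.covEta_phiphi' (A.phi X) (A.phi Y)] at h
  simp only [map_add, map_sub, map_smul, A.eta_xi, A.eta_phi, smul_eq_mul,
    mul_one, mul_zero, zero_mul, sub_zero, add_zero, zero_smul] at h
  have hs := A.g_phi_skew' X Y
  linear_combination h + 2 * hs
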